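/- Let R be any ring. The following are equivalent: (1) every acyclic complex of injective left R-modules is totally acyclic; (2) for every acyclic complex X of left R-modules all of whose components are Gorenstein injective, every cycle module Z_n(X) is Gorenstein injective. -/

import Mathlib

/-!
(2) ⇒ (1): injective modules are Gorenstein injective, so in an acyclic complex `C` of injectives
every cycle module is Gorenstein injective. A Gorenstein injective `G` has `Ext¹(E, G) = 0` for
injective `E`: a sequence `G ↪ P ↠ E` splits, because the inclusion of `G` into a term of a totally
acyclic complex extends over `P` and can be corrected into a retraction using `Hom(E, -)`-exactness.
So maps `E → Z_n C` lift along `C_{n+1} ↠ Z_n C`, which is the exactness of `Hom(E, C)`.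

(1) ⇒ (2): for an acyclic complex `X` of Gorenstein injectives it suffices to find an acyclic
complex of injectives having `Z_n X` as a cycle, since by (1) it is totally acyclic. To the right
any injective coresolution of `Z_n X` will do. To the left, the modules with an injective left
resolution whose syzygies all satisfy `Ext¹(Inj, -) = 0` contain the Gorenstein injectives and are
closed under extensions (horseshoe lemma). If `A` maps onto `Z_m X` with such a kernel `B`, the
pullback `A ×_{Z_m X} X_{m+1}` is an extension of `X_{m+1}` by `B`; resolving it gives an
injective `J ↠ A` whose kernel maps onto `Z_{m+1} X` with such a kernel again, and so on.
-/

open CategoryTheory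

universe u

namespace TotallyAcyclicPaper

/-- An unbounded chain complex of left `R`-modules. -/
abbrev Cx (R : Type u) [Ring R] := ChainComplex (ModuleCat.{u} R) ℤ

/-- A complex is acyclic (exact) if it is exact at every degree. -/
def Acyclic (R : Type u) [Ring R] (C : Cx R) : Prop :=
  ∀ (n : ℤ) (x : C.X n), C.d n (n - 1) x = 0 → ∃ y : C.X (n + 1), C.d (n + 1) n y = x

/-- The `n`-th cycle submodule `Z_n(C) = ker (d_n : C_n → C_{n-1})`. -/
def cycles (R : Type u) [Ring R] (C : Cx R) (n : ℤ) : Submodule R (C.X n) :=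
  LinearMap.ker (C.d n (n - 1)).hom

/-- An acyclic complex of injective modules is totally acyclic if `Hom(E,-)` leaves it
exact for every injective module `E`. -/
def TotallyAcyclicInj (R : Type u) [Ring R] (C : Cx R) : Prop :=
  Acyclic R C ∧ (∀ n : ℤ, Module.Injective R (C.X n)) ∧
    ∀ (E : Type u) [AddCommGroup E] [Module R E], Module.Injective R E →
      ∀ (n : ℤ) (f : E →ₗ[R] C.X n), (∀ x : E, C.d n (n - 1) (f x) = 0) →
        ∃ g : E →ₗ[R] C.X (n + 1), ∀ x : E, C.d (n + 1) n (g x) = f x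

/-- A module is Gorenstein injective if it is a cycle of a totally acyclic complex of
injective modules. -/
def IsGorensteinInj (R : Type u) [Ring R] (M : Type u) [AddCommGroup M] [Module R M] :
    Prop :=
  ∃ C : Cx R, TotallyAcyclicInj R C ∧ ∃ n : ℤ, Nonempty (M ≃ₗ[R] cycles R C n)

section LinearAlgebra

variable {R : Type*} [Ring R] {K M N X : Type*} [AddCommGroup K] [AddCommGroup M]
  [AddCommGroup N] [AddCommGroup X] [Module R K] [Module R M] [Module R N] [Module R X]

structure IsShortExact (i : K →ₗ[R] M) (p : M →ₗ[R] N) : Prop where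
  injective : Function.Injective i
  exact : Function.Exact i p
  surjective : Function.Surjective p

theorem exists_comp_eq_of_exact {i : K →ₗ[R] M} {p : M →ₗ[R] N} (hip : Function.Exact i p)
    (hp : Function.Surjective p) (h : M →ₗ[R] X) (hh : h ∘ₗ i = 0) :
    ∃ h' : N →ₗ[R] X, h' ∘ₗ p = h := by
  refine ⟨(LinearMap.range i).liftQ h ?_ ∘ₗ (hip.linearEquivOfSurjective hp).symm, ?_⟩
  · rintro _ ⟨k, rfl⟩
    exact LinearMap.congr_fun hh k
  · ext x
    simp

theorem IsShortExact.range_comp_le_ker {i : K →ₗ[R] M} {p : M →ₗ[R] N} (hip : IsShortExact i p)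
    (j : X →ₗ[R] K) : LinearMap.range (i ∘ₗ j) ≤ LinearMap.ker p := by
  rintro _ ⟨x, rfl⟩
  exact hip.exact.apply_apply_eq_zero (j x)

/-- With `X ↪ K ↠ G` presenting `G` as `K ⧸ X`, this is the short exact sequence
`K ⧸ X ↪ M ⧸ X ↠ N`. -/
theorem exists_isShortExact_quotient_range {G : Type*} [AddCommGroup G] [Module R G]
    {j : X →ₗ[R] K} {q : K →ₗ[R] G} (hjq : IsShortExact j q) {i : K →ₗ[R] M} {p : M →ₗ[R] N}
    (hip : IsShortExact i p) :
    ∃ i' : G →ₗ[R] M ⧸ LinearMap.range (i ∘ₗ j),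
      IsShortExact i' ((LinearMap.range (i ∘ₗ j)).liftQ p (hip.range_comp_le_ker j)) := by
  set S := LinearMap.range (i ∘ₗ j)
  obtain ⟨i', hi'⟩ := exists_comp_eq_of_exact hjq.exact hjq.surjective (S.mkQ ∘ₗ i)
    (LinearMap.ext fun x => (Submodule.Quotient.mk_eq_zero S).2 (LinearMap.mem_range_self _ x))
  have hi'q : ∀ a, i' (q a) = S.mkQ (i a) := LinearMap.congr_fun hi'
  refine ⟨i', (injective_iff_map_eq_zero i').2 fun y hy => ?_, fun z => ?_, fun n => ?_⟩
  · obtain ⟨a, rfl⟩ := hjq.surjective y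
    rw [hi'q, Submodule.mkQ_apply, Submodule.Quotient.mk_eq_zero] at hy
    obtain ⟨x, hx⟩ := hy
    rw [← hip.injective hx]
    exact hjq.exact.apply_apply_eq_zero x
  · obtain ⟨m, rfl⟩ := S.mkQ_surjective z
    rw [Submodule.mkQ_apply, Submodule.liftQ_apply]
    refine ⟨fun hm => ?_, ?_⟩
    · obtain ⟨a, rfl⟩ := (hip.exact m).1 hm
      exact ⟨q a, hi'q a⟩
    · rintro ⟨y, hy⟩
      obtain ⟨a, rfl⟩ := hjq.surjective y
      rw [hi'q, Submodule.mkQ_apply, Submodule.Quotient.eq] at hy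
      have hm := hip.range_comp_le_ker j hy
      rwa [LinearMap.mem_ker, map_sub, hip.exact.apply_apply_eq_zero, zero_sub,
        neg_eq_zero] at hm
  · obtain ⟨m, rfl⟩ := hip.surjective n
    exact ⟨S.mkQ m, rfl⟩

theorem injective_prod {E F : Type u} [AddCommGroup E] [AddCommGroup F] [Module R E]
    [Module R F] (hE : Module.Injective R E) (hF : Module.Injective R F) :
    Module.Injective R (E × F) := by
  refine ⟨fun Y Z _ _ _ _ f hf g => ?_⟩
  obtain ⟨g₁, hg₁⟩ := hE.out f hf (LinearMap.fst R E F ∘ₗ g)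
  obtain ⟨g₂, hg₂⟩ := hF.out f hf (LinearMap.snd R E F ∘ₗ g)
  exact ⟨g₁.prod g₂, fun y => Prod.ext (hg₁ y) (hg₂ y)⟩

theorem injective_punit : Module.Injective R PUnit.{u + 1} :=
  ⟨fun _ _ _ _ _ _ _ _ _ => ⟨0, fun _ => Subsingleton.elim _ _⟩⟩

theorem isShortExact_zero_id (E : Type u) [AddCommGroup E] [Module R E] :
    IsShortExact (0 : PUnit.{u + 1} →ₗ[R] E) LinearMap.id :=
  ⟨Function.injective_of_subsingleton _, fun y => by simp [eq_comm], Function.surjective_id⟩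

def pullback (f : M →ₗ[R] N) (g : X →ₗ[R] N) : Submodule R (M × X) :=
  LinearMap.ker (f ∘ₗ LinearMap.fst R M X - g ∘ₗ LinearMap.snd R M X)

theorem mem_pullback {f : M →ₗ[R] N} {g : X →ₗ[R] N} {x : M × X} :
    x ∈ pullback f g ↔ f x.1 = g x.2 := by
  simp [pullback, sub_eq_zero]

theorem isShortExact_pullback_snd {i : K →ₗ[R] M} {f : M →ₗ[R] N} (hif : IsShortExact i f)
    (g : X →ₗ[R] N) :
    IsShortExact ((LinearMap.inl R M X ∘ₗ i).codRestrict (pullback f g)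
        fun k => mem_pullback.2 (by simp [hif.exact.apply_apply_eq_zero]))
      (LinearMap.snd R M X ∘ₗ (pullback f g).subtype) where
  injective _ _ hab := hif.injective (congrArg (fun y : pullback f g => (y : M × X).1) hab)
  exact := by
    rintro ⟨⟨y, x⟩, hyx⟩
    refine ⟨fun hx => ?_, ?_⟩
    · obtain rfl : x = 0 := hx
      obtain ⟨k, rfl⟩ := (hif.exact y).1 (by simpa using mem_pullback.1 hyx)
      exact ⟨k, rfl⟩
    · rintro ⟨k, hk⟩
      rw [← hk]
      rfl
  surjective x := by
    obtain ⟨y, hy⟩ := hif.surjective (g x)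
    exact ⟨⟨(y, x), mem_pullback.2 hy⟩, rfl⟩

theorem pullback_fst_surjective (f : M →ₗ[R] N) {g : X →ₗ[R] N} (hg : Function.Surjective g) :
    Function.Surjective (LinearMap.fst R M X ∘ₗ (pullback f g).subtype) := by
  intro y
  obtain ⟨x, hx⟩ := hg (f y)
  exact ⟨⟨(y, x), mem_pullback.2 hx.symm⟩, rfl⟩

end LinearAlgebra

section InjOrthogonal

variable {R : Type u} [Ring R]

variable (R) in
/-- `Ext¹(J, A) = 0` for every injective module `J`, phrased as a lifting property. -/
def InjOrthogonal (A : Type u) [AddCommGroup A] [Module R A] : Prop :=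
  ∀ ⦃M N J : Type u⦄ [AddCommGroup M] [Module R M] [AddCommGroup N] [Module R N]
    [AddCommGroup J] [Module R J], Module.Injective R J →
    ∀ (i : A →ₗ[R] M) (p : M →ₗ[R] N), IsShortExact i p →
      ∀ f : J →ₗ[R] N, ∃ g : J →ₗ[R] M, p ∘ₗ g = f

/-- Pulling `p` back along `f` reduces lifting `f` to splitting a sequence `A ↪ P ↠ J`. -/
theorem InjOrthogonal.of_exists_retraction {A : Type u} [AddCommGroup A] [Module R A]
    (h : ∀ ⦃P J : Type u⦄ [AddCommGroup P] [Module R P] [AddCommGroup J] [Module R J],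
      Module.Injective R J → ∀ (i : A →ₗ[R] P) (p : P →ₗ[R] J), IsShortExact i p →
        ∃ r : P →ₗ[R] A, r ∘ₗ i = LinearMap.id) :
    InjOrthogonal R A := by
  intro M N J _ _ _ _ _ _ hJ i p hip f
  have hP := isShortExact_pullback_snd hip f
  obtain ⟨r, hr⟩ := h hJ _ _ hP
  have hsplit := (hP.exact.split_tfae hP.injective hP.surjective).out 1 0
  obtain ⟨s, hs⟩ := hsplit.1 ⟨r, hr⟩
  refine ⟨LinearMap.fst R M J ∘ₗ (pullback p f).subtype ∘ₗ s, LinearMap.ext fun x => ?_⟩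
  have hsx : ((s x : pullback p f) : M × J).2 = x := LinearMap.congr_fun hs x
  simpa [hsx] using mem_pullback.1 (s x).2

theorem InjOrthogonal.of_isShortExact {B A G : Type u} [AddCommGroup B] [AddCommGroup A]
    [AddCommGroup G] [Module R B] [Module R A] [Module R G] {j : B →ₗ[R] A} {q : A →ₗ[R] G}
    (hjq : IsShortExact j q) (hB : InjOrthogonal R B) (hG : InjOrthogonal R G) :
    InjOrthogonal R A := by
  intro M N J _ _ _ _ _ _ hJ i p hip f
  obtain ⟨i', hi'⟩ := exists_isShortExact_quotient_range hjq hip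
  obtain ⟨g₁, hg₁⟩ := hG hJ i' _ hi' f
  obtain ⟨g, hg⟩ := hB hJ (i ∘ₗ j) (LinearMap.range (i ∘ₗ j)).mkQ
    ⟨hip.injective.comp hjq.injective, LinearMap.exact_map_mkQ_range _,
      Submodule.mkQ_surjective _⟩ g₁
  refine ⟨g, ?_⟩
  rw [← hg₁, ← hg, ← LinearMap.comp_assoc, Submodule.liftQ_mkQ]

end InjOrthogonal

section Complexes

variable {R : Type u} [Ring R]

theorem d_d_apply (C : Cx R) (i j k : ℤ) (x : C.X i) : C.d j k (C.d i j x) = 0 := by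
  rw [← ModuleCat.comp_apply, C.d_comp_d]
  rfl

theorem mem_cycles_succ_iff (C : Cx R) (n : ℤ) (x : C.X (n + 1)) :
    x ∈ cycles R C (n + 1) ↔ C.d (n + 1) n x = 0 := by
  rw [cycles, add_sub_cancel_right]
  rfl

noncomputable def toCycles (C : Cx R) (n : ℤ) : C.X (n + 1) →ₗ[R] cycles R C n :=
  (C.d (n + 1) n).hom.codRestrict _ fun x => d_d_apply C (n + 1) n (n - 1) x

theorem isShortExact_toCycles {C : Cx R} (hC : Acyclic R C) (n : ℤ) :
    IsShortExact (cycles R C (n + 1)).subtype (toCycles C n) where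
  injective := Subtype.val_injective
  exact := by
    rw [LinearMap.exact_iff, Submodule.range_subtype]
    ext x
    rw [mem_cycles_succ_iff, LinearMap.mem_ker, ← Subtype.val_inj]
    rfl
  surjective := by
    rintro ⟨z, hz⟩
    obtain ⟨y, hy⟩ := hC n z hz
    exact ⟨y, Subtype.ext hy⟩

end Complexes

section Splice

variable {R : Type u} [Ring R] {C K : ℤ → ModuleCat.{u} R} {π : ∀ n, C (n + 1) →ₗ[R] K n}
  {ι : ∀ n, K n →ₗ[R] C n} (hCK : ∀ n, IsShortExact (ι (n + 1)) (π n))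

noncomputable abbrev splice : Cx R :=
  ChainComplex.of C (fun n => ModuleCat.ofHom (ι n ∘ₗ π n)) fun n => by
    ext x
    simp [(hCK n).exact.apply_apply_eq_zero]

theorem splice_d_apply (n : ℤ) (x : C (n + 1)) : (splice hCK).d (n + 1) n x = ι n (π n x) := by
  simp [splice]

theorem splice_d_eq_zero_iff (n : ℤ) (x : C (n + 1)) :
    (splice hCK).d (n + 1) n x = 0 ↔ x ∈ LinearMap.range (ι (n + 1)) := by
  have hι : Function.Injective (ι n) := by
    obtain ⟨m, rfl⟩ : ∃ m, n = m + 1 := ⟨n - 1, by ring⟩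
    exact (hCK m).injective
  rw [splice_d_apply, map_eq_zero_iff _ hι]
  exact (hCK n).exact x

theorem splice_acyclic : Acyclic R (splice hCK) := by
  intro n x hx
  obtain ⟨m, rfl⟩ : ∃ m, n = m + 1 := ⟨n - 1, by ring⟩
  obtain ⟨k, rfl⟩ := (splice_d_eq_zero_iff hCK m x).1
    ((mem_cycles_succ_iff _ m x).1 hx)
  obtain ⟨y, rfl⟩ := (hCK (m + 1)).surjective k
  exact ⟨y, splice_d_apply hCK _ y⟩

theorem splice_lift (F : Type u) [AddCommGroup F] [Module R F]
    (hlift : ∀ n (f : F →ₗ[R] K n), ∃ g : F →ₗ[R] C (n + 1), π n ∘ₗ g = f)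
    (n : ℤ) (f : F →ₗ[R] (splice hCK).X n)
    (hf : ∀ x, (splice hCK).d n (n - 1) (f x) = 0) :
    ∃ g : F →ₗ[R] (splice hCK).X (n + 1),
      ∀ x, (splice hCK).d (n + 1) n (g x) = f x := by
  obtain ⟨m, rfl⟩ : ∃ m, n = m + 1 := ⟨n - 1, by ring⟩
  have hfι : ∀ x, f x ∈ LinearMap.range (ι (m + 1)) := fun x =>
    (splice_d_eq_zero_iff hCK m _).1 ((mem_cycles_succ_iff _ m _).1 (hf x))
  let e := LinearEquiv.ofInjective (ι (m + 1)) (hCK m).injective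
  obtain ⟨g, hg⟩ := hlift (m + 1) (e.symm.toLinearMap ∘ₗ f.codRestrict _ hfι)
  refine ⟨g, fun x => ?_⟩
  rw [splice_d_apply, ← LinearMap.comp_apply (π (m + 1)), hg]
  exact congrArg Subtype.val (e.apply_symm_apply ⟨f x, hfι x⟩)

theorem cycles_splice (n : ℤ) :
    Nonempty (K (n + 1) ≃ₗ[R] cycles R (splice hCK) (n + 1)) := by
  refine ⟨(LinearEquiv.ofInjective _ (hCK n).injective).trans (LinearEquiv.ofEq _ _ ?_)⟩
  ext x
  exact ((mem_cycles_succ_iff (splice hCK) n x).trans (splice_d_eq_zero_iff hCK n x)).symm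

end Splice

section Gorenstein

variable {R : Type u} [Ring R]

theorem isGorensteinInj_of_injective {E : Type u} [AddCommGroup E] [Module R E]
    (hE : Module.Injective R E) : IsGorensteinInj R E := by
  let C : ℤ → ModuleCat.{u} R := fun _ => ModuleCat.of R (E × E)
  let K : ℤ → ModuleCat.{u} R := fun _ => ModuleCat.of R E
  let π : ∀ n, C (n + 1) →ₗ[R] K n := fun _ => LinearMap.snd R E E
  let ι : ∀ n, K n →ₗ[R] C n := fun _ => LinearMap.inl R E E
  have hses : ∀ n, IsShortExact (ι (n + 1)) (π n) := fun _ =>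
    ⟨LinearMap.inl_injective, Function.Exact.inl_snd, LinearMap.snd_surjective⟩
  refine ⟨splice hses, ⟨splice_acyclic hses, fun _ => injective_prod hE hE, fun F _ _ _ =>
    splice_lift hses F fun _ f => ⟨LinearMap.inr R E E ∘ₗ f, rfl⟩⟩, 0 + 1, cycles_splice hses 0⟩

theorem exists_retraction_of_totallyAcyclicInj {D : Cx R} (hD : TotallyAcyclicInj R D) (m : ℤ)
    {P J : Type u} [AddCommGroup P] [Module R P] [AddCommGroup J] [Module R J]
    (hJ : Module.Injective R J) {i : cycles R D (m + 1) →ₗ[R] P} {p : P →ₗ[R] J}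
    (hip : IsShortExact i p) :
    ∃ r : P →ₗ[R] cycles R D (m + 1), r ∘ₗ i = LinearMap.id := by
  obtain ⟨-, hinj, hlift⟩ := hD
  obtain ⟨h, hh⟩ := (hinj (m + 1)).out i hip.injective (cycles R D (m + 1)).subtype
  obtain ⟨φ, hφ⟩ := exists_comp_eq_of_exact hip.exact hip.surjective
    ((D.d (m + 1) m).hom ∘ₗ h) (LinearMap.ext fun z => by
      simpa [hh] using (mem_cycles_succ_iff D m z).1 z.2)
  have hφp : ∀ y, φ (p y) = D.d (m + 1) m (h y) := LinearMap.congr_fun hφ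
  obtain ⟨ψ, hψ⟩ := hlift J hJ m φ fun x => by
    obtain ⟨y, rfl⟩ := hip.surjective x
    rw [hφp]
    exact d_d_apply D _ _ _ _
  -- correcting `h` by `ψ ∘ p` keeps it an extension of the inclusion and kills its boundary
  have hr : ∀ y, (h - ψ ∘ₗ p) y ∈ cycles R D (m + 1) := fun y => by
    rw [mem_cycles_succ_iff]
    simp [hψ, hφp]
  refine ⟨(h - ψ ∘ₗ p).codRestrict _ hr, LinearMap.ext fun z => Subtype.ext ?_⟩
  simp [hh, hip.exact.apply_apply_eq_zero]

theorem InjOrthogonal.of_isGorensteinInj {A : Type u} [AddCommGroup A] [Module R A]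
    (hA : IsGorensteinInj R A) : InjOrthogonal R A := by
  obtain ⟨D, hD, n, ⟨e⟩⟩ := hA
  obtain ⟨m, rfl⟩ : ∃ m, n = m + 1 := ⟨n - 1, by ring⟩
  refine InjOrthogonal.of_exists_retraction fun P J _ _ _ _ hJ i p hip => ?_
  obtain ⟨r, hr⟩ := exists_retraction_of_totallyAcyclicInj hD m hJ
    (i := i ∘ₗ e.symm.toLinearMap) (p := p)
    ⟨hip.injective.comp e.symm.injective, LinearEquiv.precomp_exact_iff_exact.2 hip.exact,
      hip.surjective⟩
  refine ⟨e.symm.toLinearMap ∘ₗ r, LinearMap.ext fun a => ?_⟩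
  simpa using congrArg e.symm (LinearMap.congr_fun hr (e a))

variable (R) in
structure InjPresentation (N : ModuleCat.{u} R) where
  K : ModuleCat.{u} R
  J : ModuleCat.{u} R
  ι : K →ₗ[R] J
  π : J →ₗ[R] N
  isShortExact : IsShortExact ι π
  injective : Module.Injective R J

theorem exists_injPresentation_of_isGorensteinInj {N : ModuleCat.{u} R}
    (hN : IsGorensteinInj R N) : ∃ c : InjPresentation R N, IsGorensteinInj R c.K := by
  obtain ⟨D, hD, n, ⟨e⟩⟩ := hN
  have hses := isShortExact_toCycles hD.1 n
  exact ⟨⟨ModuleCat.of R (cycles R D (n + 1)), D.X (n + 1), (cycles R D (n + 1)).subtype,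
    e.symm.toLinearMap ∘ₗ toCycles D n, ⟨hses.injective,
      LinearEquiv.postcomp_exact_iff_exact.2 hses.exact, e.symm.surjective.comp hses.surjective⟩,
    hD.2.1 (n + 1)⟩, D, hD, n + 1, ⟨LinearEquiv.refl R _⟩⟩

end Gorenstein

section Resolvable

variable {R : Type u} [Ring R]

variable (R) in
/-- `N` has an injective left resolution `⋯ → J₁ → J₀ → N → 0` all of whose syzygies, `N`
included, satisfy `P`; stated coinductively, `S` being a class of such syzygies. -/
def InjResolvable (P : ModuleCat.{u} R → Prop) (N : ModuleCat.{u} R) : Prop :=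
  ∃ S : ModuleCat.{u} R → Prop, S N ∧ ∀ L, S L → P L ∧ ∃ c : InjPresentation R L, S c.K

theorem InjResolvable.exists_injPresentation {P : ModuleCat.{u} R → Prop} {N : ModuleCat.{u} R}
    (hN : InjResolvable R P N) :
    P N ∧ ∃ c : InjPresentation R N, InjResolvable R P c.K := by
  obtain ⟨S, hSN, hS⟩ := hN
  obtain ⟨hPN, c, hc⟩ := hS N hSN
  exact ⟨hPN, c, S, hc, hS⟩

theorem injResolvable_of_isGorensteinInj {N : ModuleCat.{u} R} (hN : IsGorensteinInj R N) :
    InjResolvable R (InjOrthogonal R ·) N :=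
  ⟨(IsGorensteinInj R ·), hN, fun _ hL =>
    ⟨InjOrthogonal.of_isGorensteinInj hL, exists_injPresentation_of_isGorensteinInj hL⟩⟩

section Horseshoe

variable {B N G : ModuleCat.{u} R} {j : B →ₗ[R] N} {q : N →ₗ[R] G} (cB : InjPresentation R B)
  (cG : InjPresentation R G) (φ : cG.J →ₗ[R] N)

variable (j) in
noncomputable def horseshoeMap : (cB.J × cG.J : Type u) →ₗ[R] N :=
  j ∘ₗ cB.π ∘ₗ LinearMap.fst R cB.J cG.J + φ ∘ₗ LinearMap.snd R cB.J cG.J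

theorem horseshoeMap_apply (x : cB.J × cG.J) :
    horseshoeMap j cB cG φ x = j (cB.π x.1) + φ x.2 :=
  rfl

theorem exists_apply_π_eq (hjq : IsShortExact j q) {y : N} (hy : q y = 0) :
    ∃ b, j (cB.π b) = y := by
  obtain ⟨z, rfl⟩ := (hjq.exact y).1 hy
  obtain ⟨b, rfl⟩ := cB.isShortExact.surjective z
  exact ⟨b, rfl⟩

theorem horseshoeMap_surjective (hjq : IsShortExact j q) (hφ : q ∘ₗ φ = cG.π) :
    Function.Surjective (horseshoeMap j cB cG φ) := fun y => by
  obtain ⟨x, hx⟩ := cG.isShortExact.surjective (q y)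
  obtain ⟨b, hb⟩ := exists_apply_π_eq cB hjq (y := y - φ x)
    (by rw [map_sub, ← LinearMap.comp_apply q, hφ, hx, sub_self])
  exact ⟨(b, x), by rw [horseshoeMap_apply, hb, sub_add_cancel]⟩

theorem exists_isShortExact_ker_horseshoeMap (hjq : IsShortExact j q) (hφ : q ∘ₗ φ = cG.π) :
    ∃ (i : cB.K →ₗ[R] LinearMap.ker (horseshoeMap j cB cG φ))
      (p : LinearMap.ker (horseshoeMap j cB cG φ) →ₗ[R] cG.K), IsShortExact i p := by
  have hqφ : ∀ y, q (φ y) = cG.π y := LinearMap.congr_fun hφ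
  have hsnd : ∀ x : LinearMap.ker (horseshoeMap j cB cG φ), x.1.2 ∈ LinearMap.range cG.ι :=
    fun x => by
      refine (cG.isShortExact.exact _).1 ?_
      have hx : j (cB.π x.1.1) + φ x.1.2 = 0 := x.2
      rw [← hqφ, eq_neg_of_add_eq_zero_right hx, map_neg, hjq.exact.apply_apply_eq_zero,
        neg_zero]
  let eG := LinearEquiv.ofInjective cG.ι cG.isShortExact.injective
  refine ⟨(LinearMap.inl R cB.J cG.J ∘ₗ cB.ι).codRestrict _ fun k => by
      simp [horseshoeMap_apply, cB.isShortExact.exact.apply_apply_eq_zero],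
    eG.symm.toLinearMap ∘ₗ (LinearMap.snd R cB.J cG.J ∘ₗ
      (LinearMap.ker (horseshoeMap j cB cG φ)).subtype).codRestrict _ hsnd,
    fun k k' hkk' => cB.isShortExact.injective congr(($hkk' : cB.J × cG.J).1), ?_, fun k => ?_⟩
  · rintro ⟨⟨b, x⟩, hbx⟩
    have hbx' : j (cB.π b) + φ x = 0 := hbx
    simp only [LinearMap.coe_comp, Function.comp_apply, LinearEquiv.coe_coe,
      LinearEquiv.map_eq_zero_iff]
    rw [← Subtype.val_inj]
    refine ⟨fun hx => ?_, ?_⟩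
    · obtain rfl : x = 0 := hx
      rw [map_zero, add_zero, map_eq_zero_iff _ hjq.injective] at hbx'
      obtain ⟨k, rfl⟩ := (cB.isShortExact.exact b).1 hbx'
      exact ⟨k, rfl⟩
    · rintro ⟨k, hk⟩
      exact congr(($hk).1.2).symm
  · obtain ⟨b, hb⟩ := exists_apply_π_eq cB hjq (y := -φ (cG.ι k)) (by
      rw [map_neg, hqφ, cG.isShortExact.exact.apply_apply_eq_zero, neg_zero])
    refine ⟨⟨(b, cG.ι k), by simp [horseshoeMap_apply, hb]⟩, eG.symm_apply_eq.2 ?_⟩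
    exact Subtype.ext rfl

end Horseshoe

theorem horseshoe {B N G : ModuleCat.{u} R} {j : B →ₗ[R] N} {q : N →ₗ[R] G}
    (hjq : IsShortExact j q) (hB : InjOrthogonal R B) (cB : InjPresentation R B)
    (cG : InjPresentation R G) :
    ∃ (c : InjPresentation R N) (j' : cB.K →ₗ[R] c.K) (q' : c.K →ₗ[R] cG.K),
      IsShortExact j' q' := by
  obtain ⟨φ, hφ⟩ := hB cG.injective j q hjq cG.π
  obtain ⟨j', q', hjq'⟩ := exists_isShortExact_ker_horseshoeMap cB cG φ hjq hφ
  exact ⟨⟨ModuleCat.of R (LinearMap.ker (horseshoeMap j cB cG φ)),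
      ModuleCat.of R (cB.J × cG.J), (LinearMap.ker _).subtype, horseshoeMap j cB cG φ,
      ⟨Subtype.val_injective, LinearMap.exact_subtype_ker_map _,
        horseshoeMap_surjective cB cG φ hjq hφ⟩,
      injective_prod cB.injective cG.injective⟩, j', q', hjq'⟩

theorem InjResolvable.of_isShortExact {B N G : ModuleCat.{u} R} {j : B →ₗ[R] N}
    {q : N →ₗ[R] G} (hjq : IsShortExact j q) (hB : InjResolvable R (InjOrthogonal R ·) B)
    (hG : InjResolvable R (InjOrthogonal R ·) G) : InjResolvable R (InjOrthogonal R ·) N := by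
  -- by the horseshoe lemma, the extensions of two such modules form a class closed under syzygies
  refine ⟨fun L => ∃ (B G : ModuleCat.{u} R) (j : B →ₗ[R] L) (q : L →ₗ[R] G),
      IsShortExact j q ∧ InjResolvable R (InjOrthogonal R ·) B ∧
        InjResolvable R (InjOrthogonal R ·) G, ⟨B, G, j, q, hjq, hB, hG⟩, ?_⟩
  rintro L ⟨B, G, j, q, hjq, hB, hG⟩
  obtain ⟨hBo, cB, hcB⟩ := hB.exists_injPresentation
  obtain ⟨hGo, cG, hcG⟩ := hG.exists_injPresentation
  obtain ⟨c, j', q', hjq'⟩ := horseshoe hjq hBo cB cG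
  exact ⟨InjOrthogonal.of_isShortExact hjq hBo hGo, c, cB.K, cG.K, j', q', hjq', hcB, hcG⟩

end Resolvable

section TwoSidedResolution

variable {R : Type u} [Ring R]

theorem isShortExact_injective_ι (N : ModuleCat.{u} R) :
    IsShortExact (Injective.ι N).hom (LinearMap.range (Injective.ι N).hom).mkQ :=
  ⟨(ModuleCat.mono_iff_injective _).1 inferInstance, LinearMap.exact_map_mkQ_range _,
    Submodule.mkQ_surjective _⟩

theorem injective_under (N : ModuleCat.{u} R) :
    Module.Injective R ↑(Injective.under N : ModuleCat.{u} R) :=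
  Module.injective_module_of_injective_object (inj := Injective.injective_under N) R _

noncomputable def cosyzygy (M : ModuleCat.{u} R) : ℕ → ModuleCat.{u} R
  | 0 => M
  | k + 1 => ModuleCat.of R
      (↑(Injective.under (cosyzygy M k) : ModuleCat.{u} R) ⧸
        LinearMap.range (Injective.ι (cosyzygy M k)).hom)

variable {S : ModuleCat.{u} R → Prop} (hS : ∀ L, S L → ∃ c : InjPresentation R L, S c.K)
  {M : ModuleCat.{u} R} (hM : S M)

noncomputable def syzygy : ℕ → {L : ModuleCat.{u} R // S L}
  | 0 => ⟨M, hM⟩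
  | k + 1 => ⟨(hS _ (syzygy k).2).choose.K, (hS _ (syzygy k).2).choose_spec⟩

noncomputable def syzygyPresentation (k : ℕ) : InjPresentation R (syzygy hS hM k).1 :=
  (hS _ (syzygy hS hM k).2).choose

/-- Degree `k ≥ 0` holds the `k`-th syzygy and degree `-k-1` the `(k+1)`-st cosyzygy of `M`. -/
noncomputable def twoSidedSyzygy : ℤ → ModuleCat.{u} R
  | .ofNat k => (syzygy hS hM k).1
  | .negSucc k => cosyzygy M (k + 1)

noncomputable def twoSidedTerm : ℤ → ModuleCat.{u} R
  | .ofNat 0 => Injective.under M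
  | .ofNat (k + 1) => (syzygyPresentation hS hM k).J
  | .negSucc k => Injective.under (cosyzygy M (k + 1))

noncomputable def twoSidedπ : ∀ n, twoSidedTerm hS hM (n + 1) →ₗ[R] twoSidedSyzygy hS hM n
  | .ofNat k => (syzygyPresentation hS hM k).π
  | .negSucc 0 => (LinearMap.range (Injective.ι M).hom).mkQ
  | .negSucc (k + 1) => (LinearMap.range (Injective.ι (cosyzygy M (k + 1))).hom).mkQ

noncomputable def twoSidedι : ∀ n, twoSidedSyzygy hS hM n →ₗ[R] twoSidedTerm hS hM n
  | .ofNat 0 => (Injective.ι M).hom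
  | .ofNat (k + 1) => (syzygyPresentation hS hM k).ι
  | .negSucc k => (Injective.ι (cosyzygy M (k + 1))).hom

theorem isShortExact_twoSided : ∀ n, IsShortExact (twoSidedι hS hM (n + 1)) (twoSidedπ hS hM n)
  | .ofNat k => (syzygyPresentation hS hM k).isShortExact
  | .negSucc 0 => isShortExact_injective_ι M
  | .negSucc (_ + 1) => isShortExact_injective_ι _

theorem injective_twoSidedTerm : ∀ n, Module.Injective R (twoSidedTerm hS hM n)
  | .ofNat 0 => injective_under M
  | .ofNat (k + 1) => (syzygyPresentation hS hM k).injective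
  | .negSucc _ => injective_under _

end TwoSidedResolution

theorem exists_acyclic_of_injResolvable {R : Type u} [Ring R] {M : ModuleCat.{u} R}
    (hM : InjResolvable R (fun _ => True) M) :
    ∃ C : Cx R, Acyclic R C ∧ (∀ n, Module.Injective R (C.X n)) ∧
      ∃ n, Nonempty (M ≃ₗ[R] cycles R C n) := by
  obtain ⟨S, hSM, hS⟩ := hM
  have hS' : ∀ L, S L → ∃ c : InjPresentation R L, S c.K := fun L hL => (hS L hL).2
  have hses := isShortExact_twoSided hS' hSM
  exact ⟨splice hses, splice_acyclic hses, injective_twoSidedTerm hS' hSM, Int.negSucc 0 + 1,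
    cycles_splice hses (Int.negSucc 0)⟩

section Cycles

variable {R : Type u} [Ring R]

variable {X : Cx R} {m : ℤ} {A : ModuleCat.{u} R} (p : A →ₗ[R] cycles R X m)

theorem exists_isShortExact_ker_fst_comp {K J : Type u} [AddCommGroup K] [Module R K]
    [AddCommGroup J] [Module R J] {k : K →ₗ[R] J} {w : J →ₗ[R] pullback p (toCycles X m)}
    (hkw : IsShortExact k w) :
    ∃ (i : K →ₗ[R] LinearMap.ker (LinearMap.fst R A (X.X (m + 1)) ∘ₗ
        (pullback p (toCycles X m)).subtype ∘ₗ w))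
      (p' : LinearMap.ker (LinearMap.fst R A (X.X (m + 1)) ∘ₗ
        (pullback p (toCycles X m)).subtype ∘ₗ w) →ₗ[R] cycles R X (m + 1)),
      IsShortExact i p' := by
  have hsnd : ∀ x : LinearMap.ker (LinearMap.fst R A (X.X (m + 1)) ∘ₗ
      (pullback p (toCycles X m)).subtype ∘ₗ w), (w x.1).1.2 ∈ cycles R X (m + 1) := fun x => by
    have hx := mem_pullback.1 (w x.1).2
    have hx0 : (w x.1).1.1 = 0 := x.2
    rw [hx0, map_zero, eq_comm, ← Subtype.val_inj] at hx
    exact (mem_cycles_succ_iff X m _).2 hx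
  refine ⟨k.codRestrict _ fun y => by simp [hkw.exact.apply_apply_eq_zero],
    (LinearMap.snd R A (X.X (m + 1)) ∘ₗ (pullback p (toCycles X m)).subtype ∘ₗ w ∘ₗ
      (LinearMap.ker _).subtype).codRestrict _ hsnd,
    fun y y' hyy' => hkw.injective congr(($hyy').1), fun x => ?_, fun z => ?_⟩
  · have hx0 : (w x.1).1.1 = 0 := x.2
    refine ⟨fun hx => ?_, ?_⟩
    · obtain ⟨y, hy⟩ := (hkw.exact x.1).1 (Subtype.ext (Prod.ext hx0 (congrArg Subtype.val hx)))
      exact ⟨y, Subtype.ext hy⟩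
    · rintro ⟨y, rfl⟩
      have hy : w (k y) = 0 := hkw.exact.apply_apply_eq_zero y
      exact Subtype.ext congr(($hy).1.2)
  · have hz : ((0 : A), (z : X.X (m + 1))) ∈ pullback p (toCycles X m) := by
      refine mem_pullback.2 (Subtype.ext ?_)
      rw [map_zero]
      exact ((mem_cycles_succ_iff X m z).1 z.2).symm
    obtain ⟨x, hx⟩ := hkw.surjective ⟨_, hz⟩
    exact ⟨⟨x, by simp [hx]⟩, Subtype.ext congr(($hx).1.2)⟩

theorem exists_injPresentation_of_pullback (hX : Acyclic R X)
    (c : InjPresentation R (ModuleCat.of R (pullback p (toCycles X m)))) :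
    ∃ (c' : InjPresentation R A) (i : c.K →ₗ[R] c'.K) (p' : c'.K →ₗ[R] cycles R X (m + 1)),
      IsShortExact i p' := by
  let v := LinearMap.fst R A (X.X (m + 1)) ∘ₗ (pullback p (toCycles X m)).subtype
  have hv : Function.Surjective v :=
    pullback_fst_surjective p (isShortExact_toCycles hX m).surjective
  obtain ⟨i, p', hip'⟩ := exists_isShortExact_ker_fst_comp p c.isShortExact
  exact ⟨⟨ModuleCat.of R (LinearMap.ker (v ∘ₗ c.π)), c.J, (LinearMap.ker (v ∘ₗ c.π)).subtype,
      v ∘ₗ c.π, ⟨Subtype.val_injective, LinearMap.exact_subtype_ker_map _,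
        hv.comp c.isShortExact.surjective⟩, c.injective⟩, i, p', hip'⟩

theorem injResolvable_cycles (hX : Acyclic R X)
    (hGI : ∀ i, IsGorensteinInj R (X.X i)) (n : ℤ) :
    InjResolvable R (fun _ => True) (ModuleCat.of R (cycles R X n)) := by
  refine ⟨fun A => ∃ (m : ℤ) (B : ModuleCat.{u} R) (i : B →ₗ[R] A) (p : A →ₗ[R] cycles R X m),
      IsShortExact i p ∧ InjResolvable R (InjOrthogonal R ·) B,
    ⟨n, ModuleCat.of R PUnit, 0, LinearMap.id, isShortExact_zero_id _,
      injResolvable_of_isGorensteinInj (isGorensteinInj_of_injective injective_punit)⟩, ?_⟩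
  rintro A ⟨m, B, i, p, hip, hB⟩
  have hP : InjResolvable R (InjOrthogonal R ·) (ModuleCat.of R (pullback p (toCycles X m))) :=
    InjResolvable.of_isShortExact (G := X.X (m + 1)) (isShortExact_pullback_snd hip _) hB
      (injResolvable_of_isGorensteinInj (hGI (m + 1)))
  obtain ⟨-, c, hc⟩ := hP.exists_injPresentation
  obtain ⟨c', i', p', hip'⟩ := exists_injPresentation_of_pullback p hX c
  exact ⟨trivial, c', m + 1, c.K, i', p', hip', hc⟩

end Cycles

theorem isGorensteinInj_cycles_of_forall_totallyAcyclicInj {R : Type u} [Ring R]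
    (h : ∀ C : Cx R, Acyclic R C → (∀ n, Module.Injective R (C.X n)) → TotallyAcyclicInj R C)
    {X : Cx R} (hX : Acyclic R X) (hGI : ∀ n, IsGorensteinInj R (X.X n)) (n : ℤ) :
    IsGorensteinInj R (cycles R X n) := by
  obtain ⟨C, hC, hinj, m, hm⟩ := exists_acyclic_of_injResolvable (injResolvable_cycles hX hGI n)
  exact ⟨C, h C hC hinj, m, hm⟩

theorem totallyAcyclicInj_of_forall_isGorensteinInj {R : Type u} [Ring R]
    (h : ∀ C : Cx R, Acyclic R C → (∀ n, IsGorensteinInj R (C.X n)) →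
      ∀ n, IsGorensteinInj R (cycles R C n))
    {C : Cx R} (hC : Acyclic R C) (hinj : ∀ n, Module.Injective R (C.X n)) :
    TotallyAcyclicInj R C := by
  refine ⟨hC, hinj, fun E _ _ hE n f hf => ?_⟩
  have hZ : InjOrthogonal R (cycles R C (n + 1)) := InjOrthogonal.of_isGorensteinInj
    (h C hC (fun i => isGorensteinInj_of_injective (hinj i)) (n + 1))
  obtain ⟨g, hg⟩ := hZ hE _ _ (isShortExact_toCycles hC n) (f.codRestrict _ hf)
  exact ⟨g, fun x => congrArg Subtype.val (LinearMap.congr_fun hg x)⟩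

theorem statement3 (R : Type u) [Ring R] :
    (∀ C : Cx R, Acyclic R C → (∀ n : ℤ, Module.Injective R (C.X n)) →
        TotallyAcyclicInj R C) ↔
      (∀ C : Cx R, Acyclic R C → (∀ n : ℤ, IsGorensteinInj R (C.X n)) →
        ∀ n : ℤ, IsGorensteinInj R (cycles R C n)) :=
  ⟨fun h _ hX hGI => isGorensteinInj_cycles_of_forall_totallyAcyclicInj h hX hGI,
    fun h _ hC hinj => totallyAcyclicInj_of_forall_isGorensteinInj h hC hinj⟩

end TotallyAcyclicPaper
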